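/- Suppose ε is real with |ε| < 1, Y : ℝ → ℝ is twice continuously differentiable, λ ∈ ℝ, and Y''(y) − ε·Y''(−y) + λ·Y(y) = 0 for all y ∈ (−π,π), with Y(−π) = Y(π) = 0 and Y not identically zero on (−π,π). Then λ > 0. -/

import Mathlib

open intervalIntegral Set Real
open MeasureTheory (volume)

/-! Multiply the equation by `Y` and integrate over `[-π, π]`. Integrating by parts (the boundary
terms vanish since `Y(±π) = 0`) gives `λ ∫ Y² = ∫ Y'(y)² dy + ε ∫ Y'(-y) Y'(y) dy`. By AM-GM and
the symmetry of the interval, `|∫ Y'(-y) Y'(y) dy| ≤ ∫ Y'²`, so the right-hand side is at least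
`(1 - |ε|) ∫ Y'²`, which is positive because `Y` vanishes at `π` but not everywhere on `(-π, π)`,
hence is not constant. -/

lemma integral_deriv_mul_eq_neg_integral_mul_deriv {a b : ℝ} {u u' v v' : ℝ → ℝ}
    (hu : ∀ x ∈ uIcc a b, HasDerivAt u (u' x) x) (hv : ∀ x ∈ uIcc a b, HasDerivAt v (v' x) x)
    (hu' : IntervalIntegrable u' volume a b) (hv' : IntervalIntegrable v' volume a b)
    (ha : v a = 0) (hb : v b = 0) :
    ∫ x in a..b, u' x * v x = -∫ x in a..b, u x * v' x := by
  rw [integral_mul_deriv_eq_deriv_mul hu hv hu' hv', ha, hb]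
  ring

lemma abs_integral_comp_neg_mul_le {f : ℝ → ℝ} (hf : Continuous f) {c : ℝ} (hc : 0 ≤ c) :
    |∫ x in -c..c, f (-x) * f x| ≤ ∫ x in -c..c, f x ^ 2 := by
  have hcc : -c ≤ c := by linarith
  have hint : ∀ g : ℝ → ℝ, Continuous g → IntervalIntegrable g volume (-c) c :=
    fun g hg => hg.intervalIntegrable _ _
  calc |∫ x in -c..c, f (-x) * f x|
      ≤ ∫ x in -c..c, |f (-x) * f x| := abs_integral_le_integral_abs hcc
    _ ≤ ∫ x in -c..c, (f (-x) ^ 2 + f x ^ 2) / 2 := by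
        refine integral_mono_on hcc (hint _ (by fun_prop)) (hint _ (by fun_prop)) fun x _ => ?_
        rw [abs_mul, ← sq_abs (f (-x)), ← sq_abs (f x)]
        linarith [two_mul_le_add_sq |f (-x)| |f x|]
    _ = ∫ x in -c..c, f x ^ 2 := by
        rw [integral_div, integral_add (hint _ (by fun_prop)) (hint _ (by fun_prop)),
          integral_comp_neg (fun x => f x ^ 2), neg_neg]
        ring

lemma integral_sq_deriv_pos {Y : ℝ → ℝ} {a b : ℝ} (hY : Differentiable ℝ Y)
    (hY' : Continuous (deriv Y)) (hb : Y b = 0) (hne : ∃ y ∈ Ioo a b, Y y ≠ 0) :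
    0 < ∫ x in a..b, deriv Y x ^ 2 := by
  obtain ⟨y, hy, hYy⟩ := hne
  obtain ⟨c, hc, hslope⟩ :=
    exists_deriv_eq_slope Y hy.2 hY.continuous.continuousOn hY.differentiableOn
  have hYc : deriv Y c ≠ 0 := by
    rw [hslope, hb]
    exact div_ne_zero (by simpa using hYy) (sub_pos.mpr hy.2).ne'
  exact integral_pos (hy.1.trans hy.2) (hY'.pow 2).continuousOn (fun x _ => sq_nonneg _)
    ⟨c, ⟨(hy.1.trans hc.1).le, hc.2.le⟩, sq_pos_of_ne_zero hYc⟩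

section TwiceDifferentiable

variable {Y : ℝ → ℝ} {a b : ℝ}

lemma integral_deriv_deriv_mul_eq_neg (hY : ContDiff ℝ 2 Y) (ha : Y a = 0) (hb : Y b = 0) :
    ∫ x in a..b, deriv (deriv Y) x * Y x = -∫ x in a..b, deriv Y x ^ 2 := by
  simp only [sq]
  exact integral_deriv_mul_eq_neg_integral_mul_deriv
    (fun x _ => (hY.differentiable_deriv_two x).hasDerivAt)
    (fun x _ => (hY.differentiable two_ne_zero x).hasDerivAt)
    ((hY.deriv' (n := 1)).continuous_deriv_one.intervalIntegrable _ _)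
    ((hY.continuous_deriv one_le_two).intervalIntegrable _ _) ha hb

lemma integral_deriv_deriv_comp_neg_mul (hY : ContDiff ℝ 2 Y) (ha : Y a = 0) (hb : Y b = 0) :
    ∫ x in a..b, deriv (deriv Y) (-x) * Y x = ∫ x in a..b, deriv Y (-x) * deriv Y x := by
  have hu : ∀ x, HasDerivAt (fun x => -deriv Y (-x)) (deriv (deriv Y) (-x)) x := fun x => by
    have h := ((hY.differentiable_deriv_two (-x)).hasDerivAt.comp x (hasDerivAt_neg x)).neg
    rwa [mul_neg_one, neg_neg] at h
  rw [integral_deriv_mul_eq_neg_integral_mul_deriv (fun x _ => hu x)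
    (fun x _ => (hY.differentiable two_ne_zero x).hasDerivAt)
    (((hY.deriv' (n := 1)).continuous_deriv_one.comp continuous_neg).intervalIntegrable _ _)
    ((hY.continuous_deriv one_le_two).intervalIntegrable _ _) ha hb]
  simp [integral_neg]

lemma mul_integral_sq_eq_integral_deriv_sq_add (hY : ContDiff ℝ 2 Y) {ε lam : ℝ} (hab : a ≤ b)
    (heq : ∀ y ∈ Ioo a b, deriv (deriv Y) y - ε * deriv (deriv Y) (-y) + lam * Y y = 0)
    (ha : Y a = 0) (hb : Y b = 0) :
    lam * ∫ x in a..b, Y x ^ 2 =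
      (∫ x in a..b, deriv Y x ^ 2) + ε * ∫ x in a..b, deriv Y (-x) * deriv Y x := by
  have hY'' : Continuous (deriv (deriv Y)) := (hY.deriv' (n := 1)).continuous_deriv_one
  have hYc : Continuous Y := hY.continuous
  have hint : ∀ g : ℝ → ℝ, Continuous g → IntervalIntegrable g volume a b :=
    fun g hg => hg.intervalIntegrable _ _
  -- `Y` vanishes at the endpoints, so the equation times `Y` holds on all of `[a, b]`
  have hweak : ∫ x in a..b,
      (deriv (deriv Y) x * Y x - ε * (deriv (deriv Y) (-x) * Y x) + lam * Y x ^ 2) = 0 := by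
    rw [← integral_zero (a := a) (b := b) (μ := volume)]
    refine integral_congr fun x hx => ?_
    rw [uIcc_of_le hab] at hx
    rcases eq_endpoints_or_mem_Ioo_of_mem_Icc hx with rfl | rfl | hx
    · simp [ha]
    · simp [hb]
    · linear_combination Y x * heq x hx
  rw [integral_add (hint _ (by fun_prop)) (hint _ (by fun_prop)),
    integral_sub (hint _ (by fun_prop)) (hint _ (by fun_prop)), integral_const_mul,
    integral_const_mul, integral_deriv_deriv_mul_eq_neg hY ha hb,
    integral_deriv_deriv_comp_neg_mul hY ha hb] at hweak
  linarith

end TwiceDifferentiable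

theorem dirichlet_eigenvalue_positive (ε : ℝ) (hε : |ε| < 1) (Y : ℝ → ℝ) (lam : ℝ)
    (hY : ContDiff ℝ 2 Y)
    (heq : ∀ y ∈ Set.Ioo (-Real.pi) Real.pi,
      deriv (deriv Y) y - ε * deriv (deriv Y) (-y) + lam * Y y = 0)
    (hbc1 : Y (-Real.pi) = 0) (hbc2 : Y Real.pi = 0)
    (hne : ∃ y ∈ Set.Ioo (-Real.pi) Real.pi, Y y ≠ 0) :
    0 < lam := by
  set A := ∫ x in -π..π, deriv Y x ^ 2
  set C := ∫ x in -π..π, deriv Y (-x) * deriv Y x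
  have hA : 0 < A := integral_sq_deriv_pos (hY.differentiable two_ne_zero)
    (hY.continuous_deriv one_le_two) hbc2 hne
  have hC : |C| ≤ A := abs_integral_comp_neg_mul_le (hY.continuous_deriv one_le_two) pi_pos.le
  have hεC : |ε * C| < A := by
    rw [abs_mul]
    nlinarith [abs_nonneg ε, abs_nonneg C]
  have hB : 0 ≤ ∫ x in -π..π, Y x ^ 2 :=
    integral_nonneg (neg_le_self pi_pos.le) fun x _ => sq_nonneg (Y x)
  refine pos_of_mul_pos_left ?_ hB
  rw [mul_integral_sq_eq_integral_deriv_sq_add hY (neg_le_self pi_pos.le) heq hbc1 hbc2]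
  linarith [neg_abs_le (ε * C)]
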